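/- arXiv:2605.13039 — 8 statements merged into one kernel-verified Lean document; each statement's English description precedes it below -/
import Mathlib

section
/- Let f : ℝ → ℝ be a positive, continuously differentiable, log-concave probability density function with cdf F. Then for all x > x', we have f'(x')/f(x') ≥ (f(x) - f(x'))/(F(x) - F(x')) ≥ f'(x)/f(x). -/
open MeasureTheory Set Filter

/-- Lemma A.3 (weak version): for a positive, C¹, log-concave density `f` with cdf `F`,
for all `x > x'`, `f'(x')/f(x') ≥ (f(x) - f(x'))/(F(x) - F(x')) ≥ f'(x)/f(x)`. -/
theorem stmt0 (f F : ℝ → ℝ)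
    (hpos : ∀ x, 0 < f x)
    (hC1 : ContDiff ℝ 1 f)
    (hlc : ConcaveOn ℝ univ (fun x => Real.log (f x)))
    (hint : Integrable f)
    (hdens : (∫ x, f x) = 1)
    (hF : ∀ x, F x = ∫ z in Iic x, f z)
    (x' x : ℝ) (hxx : x' < x) :
    (f x - f x') / (F x - F x') ≤ deriv f x' / f x' ∧
      deriv f x / f x ≤ (f x - f x') / (F x - F x') := by
  have hdiff : Differentiable ℝ f := hC1.differentiable one_ne_zero
  have hcont : Continuous f := hdiff.continuous
  have hderivc : Continuous (deriv f) := hC1.continuous_deriv le_rfl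
  -- derivative of log ∘ f
  have hlog : ∀ t, HasDerivAt (fun y => Real.log (f y)) (deriv f t / f t) t := fun t =>
    (hdiff t).hasDerivAt.log (hpos t).ne'
  have hlogderiv : ∀ t, deriv (fun y => Real.log (f y)) t = deriv f t / f t := fun t =>
    (hlog t).deriv
  have hanti : AntitoneOn (deriv (fun y => Real.log (f y))) univ :=
    hlc.antitoneOn_deriv fun t _ => (hlog t).differentiableAt
  have hratio : ∀ t ∈ Icc x' x, deriv f x / f x ≤ deriv f t / f t ∧
      deriv f t / f t ≤ deriv f x' / f x' := by
    intro t ht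
    constructor
    · rw [← hlogderiv t, ← hlogderiv x]
      exact hanti (mem_univ t) (mem_univ x) ht.2
    · rw [← hlogderiv t, ← hlogderiv x']
      exact hanti (mem_univ x') (mem_univ t) ht.1
  -- FTC
  have hFTC : f x - f x' = ∫ t in x'..x, deriv f t := by
    rw [intervalIntegral.integral_deriv_eq_sub (fun t _ => hdiff t)
      (hderivc.intervalIntegrable x' x)]
  -- F difference
  have hFdiff : F x - F x' = ∫ t in x'..x, f t := by
    rw [hF x, hF x',
      intervalIntegral.integral_Iic_sub_Iic hint.integrableOn hint.integrableOn]
  have hFpos : 0 < F x - F x' := by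
    rw [hFdiff]
    exact intervalIntegral.intervalIntegral_pos_of_pos
      (hint.intervalIntegrable) (fun t => hpos t) hxx
  have hfI : IntervalIntegrable f volume x' x := hint.intervalIntegrable
  have hdI : IntervalIntegrable (deriv f) volume x' x := hderivc.intervalIntegrable x' x
  constructor
  · rw [div_le_iff₀ hFpos, hFTC, hFdiff]
    have : ∫ t in x'..x, deriv f t ≤ ∫ t in x'..x, (deriv f x' / f x') * f t := by
      apply intervalIntegral.integral_mono_on hxx.le hdI
        (hfI.const_mul _)
      intro t ht
      rw [← div_le_iff₀ (hpos t)] at *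
      exact (hratio t ht).2
    rw [intervalIntegral.integral_const_mul] at this
    linarith [this]
  · rw [le_div_iff₀ hFpos, hFTC, hFdiff]
    have : ∫ t in x'..x, (deriv f x / f x) * f t ≤ ∫ t in x'..x, deriv f t := by
      apply intervalIntegral.integral_mono_on hxx.le (hfI.const_mul _) hdI
      intro t ht
      rw [← le_div_iff₀ (hpos t)]
      exact (hratio t ht).1
    rw [intervalIntegral.integral_const_mul] at this
    linarith [this]
end

section
/- Let f : ℝ → ℝ be a positive, continuously differentiable, log-concave probability density with cdf F, and let x' < x satisfy f'(x) < 0 < f'(x'). Then the inequalities f'(x')/f(x') > (f(x) - f(x'))/(F(x) - F(x')) > f'(x)/f(x) hold strictly. -/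
open MeasureTheory Set Filter

/-- If a continuous function is nonnegative on `[a,b]` and positive at some point of `[a,b]`,
its interval integral is positive. -/
lemma aux_int_pos {h : ℝ → ℝ} {a b m : ℝ} (hc : Continuous h) (hab : a < b)
    (hm : m ∈ Icc a b) (hnn : ∀ t ∈ Icc a b, 0 ≤ h t) (hpm : 0 < h m) :
    0 < ∫ t in a..b, h t := by
  obtain ⟨ε, hε, hball⟩ := Metric.isOpen_iff.mp (isOpen_Ioi.preimage hc) m hpm
  set u := max a (m - ε / 2) with hu
  set v := min b (m + ε / 2) with hv
  have hau : a ≤ u := le_max_left _ _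
  have hvb : v ≤ b := min_le_left _ _
  have huv : u < v := by
    apply max_lt <;> apply lt_min
    · exact hab
    · linarith [hm.1]
    · linarith [hm.2]
    · linarith
  have hpos : ∀ t ∈ Ioo u v, 0 < h t := by
    intro t ht
    have h1 : m - ε / 2 < t := lt_of_le_of_lt (le_max_right _ _) ht.1
    have h2 : t < m + ε / 2 := ht.2.trans_le (min_le_right _ _)
    exact hball (by rw [Metric.mem_ball, Real.dist_eq, abs_lt]; constructor <;> linarith)
  have hint : ∀ c d : ℝ, IntervalIntegrable h volume c d := fun c d =>
    hc.intervalIntegrable c d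
  have h1 : (0 : ℝ) ≤ ∫ t in a..u, h t :=
    intervalIntegral.integral_nonneg hau fun t ht =>
      hnn t ⟨ht.1, ht.2.trans ((huv.le.trans hvb))⟩
  have h2 : (0 : ℝ) < ∫ t in u..v, h t :=
    intervalIntegral.intervalIntegral_pos_of_pos_on (hint u v) hpos huv
  have h3 : (0 : ℝ) ≤ ∫ t in v..b, h t :=
    intervalIntegral.integral_nonneg hvb fun t ht =>
      hnn t ⟨(hau.trans (huv.le.trans ht.1)), ht.2⟩
  have e1 := intervalIntegral.integral_add_adjacent_intervals (hint a u) (hint u v)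
  have e2 := intervalIntegral.integral_add_adjacent_intervals (hint a v) (hint v b)
  linarith

/-- Lemma A.3 (strict version): if additionally `f'(x) < 0 < f'(x')`,
the inequalities are strict. -/
theorem stmt1 (f F : ℝ → ℝ)
    (hpos : ∀ x, 0 < f x)
    (hC1 : ContDiff ℝ 1 f)
    (hlc : ConcaveOn ℝ univ (fun x => Real.log (f x)))
    (hint : Integrable f)
    (hdens : (∫ x, f x) = 1)
    (hF : ∀ x, F x = ∫ z in Iic x, f z)
    (x' x : ℝ) (hxx : x' < x)
    (hdx : deriv f x < 0) (hdx' : 0 < deriv f x') :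
    (f x - f x') / (F x - F x') < deriv f x' / f x' ∧
      deriv f x / f x < (f x - f x') / (F x - F x') := by
  have hfd : Differentiable ℝ f := hC1.differentiable one_ne_zero
  have hcf : Continuous f := hfd.continuous
  have hcd : Continuous (deriv f) := hC1.continuous_deriv le_rfl
  set g' : ℝ → ℝ := fun t => deriv f t / f t with hg'def
  have hg'c : Continuous g' := hcd.div hcf fun t => (hpos t).ne'
  have hlogd : ∀ t, deriv (fun y => Real.log (f y)) t = g' t := fun t =>
    ((hfd t).hasDerivAt.log (hpos t).ne').deriv
  have hA : AntitoneOn (deriv fun y => Real.log (f y)) univ :=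
    hlc.antitoneOn_deriv fun t _ =>
      ((hfd t).hasDerivAt.log (hpos t).ne').differentiableAt
  have hanti : ∀ u v : ℝ, u ≤ v → g' v ≤ g' u := by
    intro u v huv
    have := hA (mem_univ u) (mem_univ v) huv
    rwa [hlogd, hlogd] at this
  have hd : ∀ t, deriv f t = g' t * f t := fun t =>
    (div_mul_cancel₀ _ (hpos t).ne').symm
  have hFF : F x - F x' = ∫ t in x'..x, f t := by
    rw [hF x, hF x']
    exact intervalIntegral.integral_Iic_sub_Iic hint.integrableOn hint.integrableOn
  have hff : f x - f x' = ∫ t in x'..x, deriv f t :=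
    (intervalIntegral.integral_deriv_eq_sub (fun t _ => hfd t)
      (hcd.intervalIntegrable _ _)).symm
  have hFpos : 0 < F x - F x' := by
    rw [hFF]
    exact intervalIntegral.intervalIntegral_pos_of_pos (hcf.intervalIntegrable _ _) hpos hxx
  have hg'x : g' x < 0 := div_neg_of_neg_of_pos hdx (hpos x)
  have hg'x' : 0 < g' x' := div_pos hdx' (hpos x')
  have hcont1 : Continuous fun t => g' x' * f t - deriv f t :=
    (continuous_const.mul hcf).sub hcd
  have hcont2 : Continuous fun t => deriv f t - g' x * f t :=
    hcd.sub (continuous_const.mul hcf)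
  have key1 : 0 < ∫ t in x'..x, (g' x' * f t - deriv f t) := by
    apply aux_int_pos hcont1 hxx (right_mem_Icc.2 hxx.le)
    · intro t ht
      rw [hd t]
      nlinarith [mul_nonneg (sub_nonneg.2 (hanti x' t ht.1)) (hpos t).le]
    · rw [hd x]
      nlinarith [mul_pos (show (0:ℝ) < g' x' - g' x by linarith) (hpos x)]
  have key2 : 0 < ∫ t in x'..x, (deriv f t - g' x * f t) := by
    apply aux_int_pos hcont2 hxx (left_mem_Icc.2 hxx.le)
    · intro t ht
      rw [hd t]
      nlinarith [mul_nonneg (sub_nonneg.2 (hanti t x ht.2)) (hpos t).le]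
    · rw [hd x']
      nlinarith [mul_pos (show (0:ℝ) < g' x' - g' x by linarith) (hpos x')]
  rw [intervalIntegral.integral_sub (f := fun t => g' x' * f t) (g := deriv f) ((continuous_const.mul hcf).intervalIntegrable _ _)
      (hcd.intervalIntegrable _ _), intervalIntegral.integral_const_mul] at key1
  rw [intervalIntegral.integral_sub (f := deriv f) (g := fun t => g' x * f t) (hcd.intervalIntegrable _ _)
      ((continuous_const.mul hcf).intervalIntegrable _ _),
      intervalIntegral.integral_const_mul] at key2
  constructor
  · rw [div_lt_iff₀ hFpos, hff, hFF]
    linarith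
  · rw [lt_div_iff₀ hFpos, hff, hFF]
    linarith
end

section
/- Under the assumptions of the pessimistic-prior setting, define R(θ̂) = (∫_{θ̂}^{θ̄} v(θ)g(θ)/θ dθ) / (∫_{θ̲}^{θ̂} v(θ)g(θ) dθ). Then R is strictly decreasing on (θ̲, θ̃) and weakly increasing on (θ̃, θ̄), where θ̃ is the zero-crossing point of v. -/
/-!
Write `F = v g`, `D(x) = ∫_θ̲^x F` and `N(x) = ∫_x^θ̄ F/θ`, so that `R = N / D` and
`R' = -F (D/x + N) / D²`. Since `D < 0` and `F` has the sign of `θ - θ̃`, everything rests on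
`D(x)/x + N(x) ≤ 0`, strictly for `x < θ̃` (Lemma A.1). The left side is `∫ F(θ) / max x θ`, and
`F(θ) / max x θ ≤ F(θ) / max x θ̃` pointwise because `F` changes sign only once, at `θ̃`, while
`1 / max x θ` is decreasing; integrating gives at most `E[v] / max x θ̃ ≤ 0`.
-/

open Set intervalIntegral Topology

theorem integral_mul_neg_of_monotoneOn {a b x : ℝ} {v g : ℝ → ℝ} (hx : x ∈ Ioo a b)
    (hv : ContinuousOn v (Icc a b)) (hvmono : MonotoneOn v (Icc a b))
    (hg : ContinuousOn g (Icc a b)) (hgpos : ∀ θ ∈ Icc a b, 0 < g θ)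
    (hva : v a < 0) (hE : ∫ θ in a..b, v θ * g θ ≤ 0) :
    ∫ θ in a..x, v θ * g θ < 0 := by
  have hF : ContinuousOn (fun θ => v θ * g θ) (Icc a b) := hv.mul hg
  have haI : a ∈ Icc a b := left_mem_Icc.2 (hx.1.trans hx.2).le
  have hxI : x ∈ Icc a b := Ioo_subset_Icc_self hx
  rcases le_or_gt (v x) 0 with hvx | hvx
  · -- `v ≤ 0` on `[a, x]` by monotonicity, and `v a < 0`
    have hlt := integral_lt_integral_of_continuousOn_of_le_of_exists_lt hx.1
      (hF.mono (Icc_subset_Icc_right hx.2.le)) continuousOn_const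
      (fun θ hθ => mul_nonpos_of_nonpos_of_nonneg
        ((hvmono ⟨hθ.1.le, hθ.2.trans hx.2.le⟩ hxI hθ.2).trans hvx)
        (hgpos θ ⟨hθ.1.le, hθ.2.trans hx.2.le⟩).le)
      ⟨a, left_mem_Icc.2 hx.1.le, mul_neg_of_neg_of_pos hva (hgpos a haI)⟩
    simpa using hlt
  · -- `v > 0` on `[x, b]`, so the mass beyond `x` is positive while the total is `≤ 0`
    have hlt := integral_lt_integral_of_continuousOn_of_le_of_exists_lt hx.2
      continuousOn_const (hF.mono (Icc_subset_Icc_left hx.1.le))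
      (fun θ hθ => (mul_pos (hvx.trans_le (hvmono hxI ⟨hx.1.le.trans hθ.1.le, hθ.2⟩ hθ.1.le))
        (hgpos θ ⟨hx.1.le.trans hθ.1.le, hθ.2⟩)).le)
      ⟨x, left_mem_Icc.2 hx.2.le, mul_pos hvx (hgpos x hxI)⟩
    rw [intervalIntegral.integral_const, smul_zero] at hlt
    rw [← integral_add_adjacent_intervals
      ((hF.mono (uIcc_subset_Icc haI hxI)).intervalIntegrable)
      ((hF.mono (uIcc_subset_Icc hxI (right_mem_Icc.2 (hx.1.trans hx.2).le))).intervalIntegrable)]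
      at hE
    linarith

theorem div_max_le_div_max_of_signChange {x c θ y : ℝ} (hx : 0 < x) (hneg : θ < c → y ≤ 0)
    (hnonneg : c ≤ θ → 0 ≤ y) : y / max x θ ≤ y / max x c := by
  rw [div_le_div_iff₀ (hx.trans_le (le_max_left x θ)) (hx.trans_le (le_max_left x c))]
  rcases lt_or_ge θ c with hθ | hθ
  · exact mul_le_mul_of_nonpos_left (max_le_max_left x hθ.le) (hneg hθ)
  · exact mul_le_mul_of_nonneg_left (max_le_max_left x hθ) (hnonneg hθ)

theorem integral_div_add_integral_div_eq_integral_div_max {a b x : ℝ} {F : ℝ → ℝ} (ha : 0 < a)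
    (hx : x ∈ Icc a b) (hF : ContinuousOn F (Icc a b)) :
    (∫ θ in a..x, F θ) / x + ∫ θ in x..b, F θ / θ = ∫ θ in a..b, F θ / max x θ := by
  have hFmax : ContinuousOn (fun θ => F θ / max x θ) (Icc a b) :=
    hF.div (continuous_const.max continuous_id).continuousOn
      fun θ _ => ((ha.trans_le hx.1).trans_le (le_max_left x θ)).ne'
  have hbI : b ∈ Icc a b := right_mem_Icc.2 (hx.1.trans hx.2)
  rw [← integral_add_adjacent_intervals
    (hFmax.mono (uIcc_subset_Icc (left_mem_Icc.2 (hx.1.trans hx.2)) hx)).intervalIntegrable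
    (hFmax.mono (uIcc_subset_Icc hx hbI)).intervalIntegrable, ← intervalIntegral.integral_div]
  congr 1
  · refine integral_congr fun θ hθ => ?_
    rw [uIcc_of_le hx.1] at hθ
    simp only [max_eq_left hθ.2]
  · refine integral_congr fun θ hθ => ?_
    rw [uIcc_of_le hx.2] at hθ
    simp only [max_eq_right hθ.1]

theorem integral_div_add_integral_div_nonpos {a b c x : ℝ} {F : ℝ → ℝ} (ha : 0 < a)
    (hx : x ∈ Icc a b) (hF : ContinuousOn F (Icc a b))
    (hneg : ∀ θ ∈ Icc a b, θ < c → F θ ≤ 0) (hnonneg : ∀ θ ∈ Icc a b, c ≤ θ → 0 ≤ F θ)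
    (hE : ∫ θ in a..b, F θ ≤ 0) :
    (∫ θ in a..x, F θ) / x + ∫ θ in x..b, F θ / θ ≤ 0 := by
  have hxpos : 0 < x := ha.trans_le hx.1
  have hab : a ≤ b := hx.1.trans hx.2
  rw [integral_div_add_integral_div_eq_integral_div_max ha hx hF]
  calc ∫ θ in a..b, F θ / max x θ ≤ ∫ θ in a..b, F θ / max x c :=
        integral_mono_on hab
          (ContinuousOn.intervalIntegrable_of_Icc hab <| hF.div
            (continuous_const.max continuous_id).continuousOn
            fun θ _ => (hxpos.trans_le (le_max_left x θ)).ne')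
          ((hF.div_const _).intervalIntegrable_of_Icc hab)
          fun θ hθ => div_max_le_div_max_of_signChange hxpos (hneg θ hθ) (hnonneg θ hθ)
    _ ≤ 0 := by
        rw [intervalIntegral.integral_div]
        exact div_nonpos_of_nonpos_of_nonneg hE (hxpos.le.trans (le_max_left x c))

theorem integral_div_add_integral_div_neg {a b c x : ℝ} {F : ℝ → ℝ} (ha : 0 < a)
    (hx : x ∈ Ioo a b) (hxc : x < c) (hF : ContinuousOn F (Icc a b))
    (hneg : ∀ θ ∈ Icc a b, θ < c → F θ < 0) (hnonneg : ∀ θ ∈ Icc a b, c ≤ θ → 0 ≤ F θ)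
    (hE : ∫ θ in a..b, F θ ≤ 0) :
    (∫ θ in a..x, F θ) / x + ∫ θ in x..b, F θ / θ < 0 := by
  have hxpos : 0 < x := ha.trans hx.1
  have haI : a ∈ Icc a b := left_mem_Icc.2 (hx.1.trans hx.2).le
  rw [integral_div_add_integral_div_eq_integral_div_max ha (Ioo_subset_Icc_self hx) hF]
  calc ∫ θ in a..b, F θ / max x θ < ∫ θ in a..b, F θ / max x c := by
        refine integral_lt_integral_of_continuousOn_of_le_of_exists_lt (hx.1.trans hx.2)
          (hF.div (continuous_const.max continuous_id).continuousOn
            fun θ _ => (hxpos.trans_le (le_max_left x θ)).ne')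
          (hF.div_const _)
          (fun θ hθ => div_max_le_div_max_of_signChange hxpos
            (fun h => (hneg θ (Ioc_subset_Icc_self hθ) h).le) (hnonneg θ (Ioc_subset_Icc_self hθ)))
          ⟨a, haI, ?_⟩
        rw [max_eq_left hx.1.le, max_eq_right hxc.le, div_lt_div_iff₀ hxpos (hxpos.trans hxc)]
        exact mul_lt_mul_of_neg_left hxc (hneg a haI (hx.1.trans hxc))
    _ ≤ 0 := by
        rw [intervalIntegral.integral_div]
        exact div_nonpos_of_nonpos_of_nonneg hE (hxpos.le.trans (le_max_left x c))

noncomputable def integralRatio (F : ℝ → ℝ) (a b u : ℝ) : ℝ :=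
  (∫ θ in u..b, F θ / θ) / ∫ θ in a..u, F θ

theorem hasDerivAt_integralRatio {a b x : ℝ} {F : ℝ → ℝ} (ha : 0 < a)
    (hx : x ∈ Ioo a b) (hF : ContinuousOn F (Icc a b)) (hD : ∫ θ in a..x, F θ ≠ 0) :
    HasDerivAt (integralRatio F a b)
      (-F x * ((∫ θ in a..x, F θ) / x + ∫ θ in x..b, F θ / θ) / (∫ θ in a..x, F θ) ^ 2) x := by
  have hH : ContinuousOn (fun θ => F θ / θ) (Icc a b) :=
    hF.div continuousOn_id fun θ hθ => (ha.trans_le hθ.1).ne'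
  have hxI : x ∈ Icc a b := Ioo_subset_Icc_self hx
  have hIoo : Ioo a b ∈ 𝓝 x := Ioo_mem_nhds hx.1 hx.2
  have hDx : HasDerivAt (fun u => ∫ θ in a..u, F θ) (F x) x :=
    integral_hasDerivAt_right
      (hF.mono (uIcc_subset_Icc (left_mem_Icc.2 (hx.1.trans hx.2).le) hxI)).intervalIntegrable
      ((hF.mono Ioo_subset_Icc_self).stronglyMeasurableAtFilter isOpen_Ioo x hx)
      ((hF.mono Ioo_subset_Icc_self).continuousAt hIoo)
  have hNx : HasDerivAt (fun u => ∫ θ in u..b, F θ / θ) (-(F x / x)) x :=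
    integral_hasDerivAt_left
      (hH.mono (uIcc_subset_Icc hxI (right_mem_Icc.2 (hx.1.trans hx.2).le))).intervalIntegrable
      ((hH.mono Ioo_subset_Icc_self).stronglyMeasurableAtFilter isOpen_Ioo x hx)
      ((hH.mono Ioo_subset_Icc_self).continuousAt hIoo)
  exact (hNx.div hDx hD).congr_deriv (by ring)

theorem strictAntiOn_integralRatio {a b c : ℝ} {F : ℝ → ℝ} (ha : 0 < a) (hcb : c ≤ b)
    (hF : ContinuousOn F (Icc a b))
    (hneg : ∀ θ ∈ Icc a b, θ < c → F θ < 0) (hnonneg : ∀ θ ∈ Icc a b, c ≤ θ → 0 ≤ F θ)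
    (hE : ∫ θ in a..b, F θ ≤ 0) (hD : ∀ x ∈ Ioo a c, ∫ θ in a..x, F θ ≠ 0) :
    StrictAntiOn (integralRatio F a b) (Ioo a c) := by
  have hsub : Ioo a c ⊆ Ioo a b := Ioo_subset_Ioo_right hcb
  have hderiv := fun x (hx : x ∈ Ioo a c) => hasDerivAt_integralRatio ha (hsub hx) hF (hD x hx)
  refine strictAntiOn_of_deriv_neg (convex_Ioo a c)
    (fun x hx => (hderiv x hx).continuousAt.continuousWithinAt) fun x hx => ?_
  rw [interior_Ioo] at hx
  rw [(hderiv x hx).deriv]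
  exact div_neg_of_neg_of_pos
    (mul_neg_of_pos_of_neg (neg_pos.2 (hneg x (Ioo_subset_Icc_self (hsub hx)) hx.2))
      (integral_div_add_integral_div_neg ha (hsub hx) hx.2 hF hneg hnonneg hE))
    (sq_pos_of_ne_zero (hD x hx))

theorem monotoneOn_integralRatio {a b c : ℝ} {F : ℝ → ℝ} (ha : 0 < a) (hac : a ≤ c)
    (hF : ContinuousOn F (Icc a b))
    (hneg : ∀ θ ∈ Icc a b, θ < c → F θ ≤ 0) (hnonneg : ∀ θ ∈ Icc a b, c ≤ θ → 0 ≤ F θ)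
    (hE : ∫ θ in a..b, F θ ≤ 0) (hD : ∀ x ∈ Ioo c b, ∫ θ in a..x, F θ ≠ 0) :
    MonotoneOn (integralRatio F a b) (Ioo c b) := by
  have hsub : Ioo c b ⊆ Ioo a b := Ioo_subset_Ioo_left hac
  have hderiv := fun x (hx : x ∈ Ioo c b) => hasDerivAt_integralRatio ha (hsub hx) hF (hD x hx)
  refine monotoneOn_of_deriv_nonneg (convex_Ioo c b)
    (fun x hx => (hderiv x hx).continuousAt.continuousWithinAt)
    (by rw [interior_Ioo]; exact fun x hx => (hderiv x hx).differentiableAt.differentiableWithinAt)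
    fun x hx => ?_
  rw [interior_Ioo] at hx
  rw [(hderiv x hx).deriv]
  have hxI : x ∈ Icc a b := Ioo_subset_Icc_self (hsub hx)
  exact div_nonneg (mul_nonneg_of_nonpos_of_nonpos (neg_nonpos.2 (hnonneg x hxI hx.1.le))
    (integral_div_add_integral_div_nonpos ha hxI hF hneg hnonneg hE)) (sq_nonneg _)

theorem stmt3_general (θlo θhi θtilde : ℝ) (g v : ℝ → ℝ)
    (h0 : 0 < θlo)
    (hgc : ContinuousOn g (Icc θlo θhi))
    (hgpos : ∀ θ ∈ Icc θlo θhi, 0 < g θ)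
    (hvC1 : ContDiff ℝ 1 v)
    (hvmono : MonotoneOn v (Icc θlo θhi))
    (hEv : (∫ θ in θlo..θhi, v θ * g θ) ≤ 0)
    (htilde : θtilde ∈ Ioo θlo θhi)
    (hneg : ∀ θ ∈ Icc θlo θhi, θ < θtilde → v θ < 0)
    (hnonneg : ∀ θ ∈ Icc θlo θhi, θtilde ≤ θ → 0 ≤ v θ)
    (R : ℝ → ℝ)
    (hR : ∀ θhat, R θhat =
      (∫ θ in θhat..θhi, v θ * g θ / θ) / (∫ θ in θlo..θhat, v θ * g θ)) :
    StrictAntiOn R (Ioo θlo θtilde) ∧ MonotoneOn R (Ioo θtilde θhi) := by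
  obtain ⟨hlo, hhi⟩ := htilde
  have hRF : R = integralRatio (fun θ => v θ * g θ) θlo θhi := funext hR
  have hv : ContinuousOn v (Icc θlo θhi) := hvC1.continuous.continuousOn
  have hF : ContinuousOn (fun θ => v θ * g θ) (Icc θlo θhi) := hv.mul hgc
  have hFneg : ∀ θ ∈ Icc θlo θhi, θ < θtilde → v θ * g θ < 0 := fun θ hθ h =>
    mul_neg_of_neg_of_pos (hneg θ hθ h) (hgpos θ hθ)
  have hFnonneg : ∀ θ ∈ Icc θlo θhi, θtilde ≤ θ → 0 ≤ v θ * g θ := fun θ hθ h =>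
    mul_nonneg (hnonneg θ hθ h) (hgpos θ hθ).le
  have hD : ∀ x ∈ Ioo θlo θhi, ∫ θ in θlo..x, v θ * g θ ≠ 0 := fun x hx =>
    (integral_mul_neg_of_monotoneOn hx hv hvmono hgc hgpos
      (hneg θlo (left_mem_Icc.2 (hlo.trans hhi).le) hlo) hEv).ne
  rw [hRF]
  exact ⟨strictAntiOn_integralRatio h0 hhi.le hF hFneg hFnonneg hEv
      fun x hx => hD x ⟨hx.1, hx.2.trans hhi⟩,
    monotoneOn_integralRatio h0 hlo.le hF (fun θ hθ h => (hFneg θ hθ h).le) hFnonneg hEv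
      fun x hx => hD x ⟨hlo.trans hx.1, hx.2⟩⟩

/-- Lemma A.2: under a pessimistic prior, `R(θ̂)` is strictly decreasing on `(θ̲, θ̃)`
and weakly increasing on `(θ̃, θ̄)`. -/
theorem stmt3 (θlo θhi θtilde : ℝ) (g v : ℝ → ℝ)
    (h0 : 0 < θlo) (hlh : θlo < θhi)
    (hgc : ContinuousOn g (Icc θlo θhi))
    (hgpos : ∀ θ ∈ Icc θlo θhi, 0 < g θ)
    (hgint : (∫ θ in θlo..θhi, g θ) = 1)
    (hvC1 : ContDiff ℝ 1 v)
    (hvmono : MonotoneOn v (Icc θlo θhi))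
    (hEv : (∫ θ in θlo..θhi, v θ * g θ) ≤ 0)
    (htilde : θtilde ∈ Ioo θlo θhi)
    (hneg : ∀ θ ∈ Icc θlo θhi, θ < θtilde → v θ < 0)
    (hnonneg : ∀ θ ∈ Icc θlo θhi, θtilde ≤ θ → 0 ≤ v θ)
    (R : ℝ → ℝ)
    (hR : ∀ θhat, R θhat =
      (∫ θ in θhat..θhi, v θ * g θ / θ) / (∫ θ in θlo..θhat, v θ * g θ)) :
    StrictAntiOn R (Ioo θlo θtilde) ∧ MonotoneOn R (Ioo θtilde θhi) :=
  stmt3_general θlo θhi θtilde g v h0 hgc hgpos hvC1 hvmono hEv htilde hneg hnonneg R hR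
end

section
/- Suppose E[v(θ)/θ] = ∫_{θ̲}^{θ̄} v(θ)g(θ)/θ dθ ≥ 0 where v is weakly increasing with zero-crossing θ̃ ∈ (θ̲, θ̄), g > 0 is a density on [θ̲, θ̄], and 0 < θ̲. Then for any θ̂ ∈ (θ̲, θ̄) with ∫_{θ̲}^{θ̂} v g dθ < 0, it holds that (1/θ̂)·∫_{θ̲}^{θ̂} v(θ)g(θ) dθ + ∫_{θ̂}^{θ̄} v(θ)g(θ)/θ dθ > 0. -/
/-!
The sum equals `∫_{θ̲}^{θ̄} v g / θ - ∫_{θ̲}^{θ̂} v g (1/θ - 1/θ̂)`, so it suffices that the last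
integral is negative. On `[θ̲, θ̂]` the weight `1/θ - 1/θ̂` is nonnegative and decreasing, hence at
least `c = max (1/θ̃ - 1/θ̂) 0` where `v g < 0` (before `θ̃`) and at most `c` where `v g ≥ 0`.
Replacing the weight by `c` therefore strictly increases the integral, to `c ∫_{θ̲}^{θ̂} v g ≤ 0`.
-/

open Set intervalIntegral
open MeasureTheory (volume)

theorem integral_mul_lt_mul_integral_of_single_crossing {f w : ℝ → ℝ} {a b t c : ℝ}
    (hab : a < b) (hf : ContinuousOn f (Icc a b)) (hw : ContinuousOn w (Icc a b))
    (hf_neg : ∀ x ∈ Icc a b, x < t → f x < 0) (hf_nonneg : ∀ x ∈ Icc a b, t ≤ x → 0 ≤ f x)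
    (hw_ge : ∀ x ∈ Icc a b, x < t → c ≤ w x) (hw_le : ∀ x ∈ Icc a b, t ≤ x → w x ≤ c)
    (hat : a < t) (hwa : c < w a) :
    ∫ x in a..b, f x * w x < c * ∫ x in a..b, f x := by
  have hpointwise : ∀ x ∈ Icc a b, f x * w x ≤ f x * c := fun x hx ↦ by
    rcases lt_or_ge x t with hxt | hxt
    · exact mul_le_mul_of_nonpos_left (hw_ge x hx hxt) (hf_neg x hx hxt).le
    · exact mul_le_mul_of_nonneg_left (hw_le x hx hxt) (hf_nonneg x hx hxt)
  have hstrict : f a * w a < f a * c :=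
    mul_lt_mul_of_neg_left hwa (hf_neg a (left_mem_Icc.2 hab.le) hat)
  rw [mul_comm, ← integral_mul_const]
  exact integral_lt_integral_of_continuousOn_of_le_of_exists_lt hab (hf.mul hw)
    (hf.mul continuousOn_const) (fun x hx ↦ hpointwise x (Ioc_subset_Icc_self hx))
    ⟨a, left_mem_Icc.2 hab.le, hstrict⟩

theorem inv_mul_integral_add_integral_div_eq {f : ℝ → ℝ} {a b c : ℝ} (ha : 0 < a)
    (hab : a ≤ b) (hbc : b ≤ c) (hf : ContinuousOn f (Icc a c)) :
    (1 / b) * (∫ x in a..b, f x) + ∫ x in b..c, f x / x =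
      (∫ x in a..c, f x / x) - ∫ x in a..b, f x * (1 / x - 1 / b) := by
  have hdiv : ContinuousOn (fun x ↦ f x / x) (Icc a c) :=
    hf.div continuousOn_id fun x hx ↦ (ha.trans_le hx.1).ne'
  have hf_ab :=
    (hf.mono (Icc_subset_Icc_right hbc)).intervalIntegrable_of_Icc (μ := volume) hab
  have hdiv_ab :=
    (hdiv.mono (Icc_subset_Icc_right hbc)).intervalIntegrable_of_Icc (μ := volume) hab
  have hdiv_bc :=
    (hdiv.mono (Icc_subset_Icc_left hab)).intervalIntegrable_of_Icc (μ := volume) hbc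
  have hweighted : ∫ x in a..b, f x * (1 / x - 1 / b) =
      (∫ x in a..b, f x / x) - (1 / b) * ∫ x in a..b, f x := by
    rw [← integral_const_mul, ← integral_sub hdiv_ab (hf_ab.const_mul _)]
    congr 1 with x
    ring
  rw [hweighted, ← integral_add_adjacent_intervals hdiv_ab hdiv_bc]
  ring

theorem stmt5_general (θlo θhi θtilde : ℝ) (g v : ℝ → ℝ)
    (h0 : 0 < θlo)
    (hgc : ContinuousOn g (Icc θlo θhi))
    (hgpos : ∀ θ ∈ Icc θlo θhi, 0 < g θ)
    (hvc : ContinuousOn v (Icc θlo θhi))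
    (htilde : θtilde ∈ Ioo θlo θhi)
    (hneg : ∀ θ ∈ Icc θlo θhi, θ < θtilde → v θ < 0)
    (hnonneg : ∀ θ ∈ Icc θlo θhi, θtilde ≤ θ → 0 ≤ v θ)
    (hEvθ : 0 ≤ ∫ θ in θlo..θhi, v θ * g θ / θ)
    (θhat : ℝ) (hθhat : θhat ∈ Ioo θlo θhi)
    (hden : (∫ θ in θlo..θhat, v θ * g θ) < 0) :
    0 < (1 / θhat) * (∫ θ in θlo..θhat, v θ * g θ) +
      (∫ θ in θhat..θhi, v θ * g θ / θ) := by
  obtain ⟨hlo_hat, hhat_hi⟩ := hθhat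
  have hsub : Icc θlo θhat ⊆ Icc θlo θhi := Icc_subset_Icc_right hhat_hi.le
  have hvg : ContinuousOn (fun θ ↦ v θ * g θ) (Icc θlo θhi) := hvc.mul hgc
  have htilde_pos : 0 < θtilde := h0.trans htilde.1
  set c := max (1 / θtilde - 1 / θhat) 0
  have hweighted : ∫ θ in θlo..θhat, v θ * g θ * (1 / θ - 1 / θhat) <
      c * ∫ θ in θlo..θhat, v θ * g θ := by
    refine integral_mul_lt_mul_integral_of_single_crossing hlo_hat (hvg.mono hsub)
      ((continuousOn_const.div continuousOn_id fun θ hθ ↦ (h0.trans_le hθ.1).ne').sub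
        continuousOn_const)
      (fun θ hθ hθt ↦ mul_neg_of_neg_of_pos (hneg θ (hsub hθ) hθt) (hgpos θ (hsub hθ)))
      (fun θ hθ hθt ↦ mul_nonneg (hnonneg θ (hsub hθ) hθt) (hgpos θ (hsub hθ)).le)
      (fun θ hθ hθt ↦ ?_) (fun θ hθ hθt ↦ ?_) htilde.1 ?_
    · have hθ_pos : 0 < θ := h0.trans_le hθ.1
      exact max_le (by gcongr) (sub_nonneg.2 (one_div_le_one_div_of_le hθ_pos hθ.2))
    · exact le_max_of_le_left (by gcongr)
    · refine max_lt (by gcongr; exact htilde.1) (sub_pos.2 ?_)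
      exact one_div_lt_one_div_of_lt h0 hlo_hat
  have hcA : c * (∫ θ in θlo..θhat, v θ * g θ) ≤ 0 :=
    mul_nonpos_of_nonneg_of_nonpos (le_max_right _ _) hden.le
  rw [inv_mul_integral_add_integral_div_eq h0 hlo_hat.le hhat_hi.le hvg]
  linarith

/-- Extreme optimism: if `∫ v g/θ ≥ 0`, then for any `θ̂` with `∫_{θ̲}^{θ̂} vg < 0`,
`(1/θ̂)·∫_{θ̲}^{θ̂} v g + ∫_{θ̂}^{θ̄} v g/θ > 0`. -/
theorem stmt5 (θlo θhi θtilde : ℝ) (g v : ℝ → ℝ)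
    (h0 : 0 < θlo) (hlh : θlo < θhi)
    (hgc : ContinuousOn g (Icc θlo θhi))
    (hgpos : ∀ θ ∈ Icc θlo θhi, 0 < g θ)
    (hgint : (∫ θ in θlo..θhi, g θ) = 1)
    (hvc : ContinuousOn v (Icc θlo θhi))
    (hvmono : MonotoneOn v (Icc θlo θhi))
    (htilde : θtilde ∈ Ioo θlo θhi)
    (hneg : ∀ θ ∈ Icc θlo θhi, θ < θtilde → v θ < 0)
    (hnonneg : ∀ θ ∈ Icc θlo θhi, θtilde ≤ θ → 0 ≤ v θ)
    (hEvθ : 0 ≤ ∫ θ in θlo..θhi, v θ * g θ / θ)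
    (θhat : ℝ) (hθhat : θhat ∈ Ioo θlo θhi)
    (hden : (∫ θ in θlo..θhat, v θ * g θ) < 0) :
    0 < (1 / θhat) * (∫ θ in θlo..θhat, v θ * g θ) +
      (∫ θ in θhat..θhi, v θ * g θ / θ) :=
  stmt5_general θlo θhi θtilde g v h0 hgc hgpos hvc htilde hneg hnonneg hEvθ θhat hθhat hden
end

section
/- Let φ : (0,∞) → ℝ be twice continuously differentiable, increasing, and convex, with φ'(x) > 0 for all x, φ(x) → ∞ as x → ∞, and φ''(x)/(φ'(x))² → 0 as x → ∞. Define b(p) = 1/φ'(φ⁻¹(log(1/p))) for small p > 0. Then for any fixed c > 0, b(cp)/b(p) → 1 as p → 0⁺. -/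
open Set Filter Real

/-- Lemma A.4: for `φ` C², increasing, convex, unbounded, with `φ''/(φ')² → 0`,
and `b(p) = 1/φ'(φ⁻¹(log(1/p)))`, we have `b(cp)/b(p) → 1` as `p → 0⁺`, for any `c > 0`. -/
theorem stmt6 (φ φinv b : ℝ → ℝ)
    (hC2 : ContDiffOn ℝ 2 φ (Ioi 0))
    (hmono : StrictMonoOn φ (Ioi 0))
    (hderiv_pos : ∀ x > 0, 0 < deriv φ x)
    (hconv : ConvexOn ℝ (Ioi 0) φ)
    (htop : Tendsto φ atTop atTop)
    (hreg : Tendsto (fun x => deriv (deriv φ) x / (deriv φ x) ^ 2) atTop (nhds 0))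
    (hφinv : ∀ x > 0, φinv (φ x) = x)
    (hφinv' : ∀ᶠ y in atTop, 0 < φinv y ∧ φ (φinv y) = y)
    (hb : ∀ p > 0, b p = 1 / deriv φ (φinv (Real.log (1 / p))))
    (c : ℝ) (hc : 0 < c) :
    Tendsto (fun p => b (c * p) / b p) (nhdsWithin 0 (Ioi 0)) (nhds 1) := by
  have hopen : IsOpen (Ioi (0:ℝ)) := isOpen_Ioi
  have hφdiff : ∀ x > 0, HasDerivAt φ (deriv φ x) x := fun x hx =>
    ((hC2.differentiableOn (by norm_num)).differentiableAt (hopen.mem_nhds hx)).hasDerivAt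
  have hC1 : ContDiffOn ℝ 1 (deriv φ) (Ioi 0) := by
    have h := hC2.deriv_of_isOpen hopen (m := 1) (by norm_num)
    simpa using h
  have hφ'diff : ∀ x > 0, HasDerivAt (deriv φ) (deriv (deriv φ) x) x := fun x hx =>
    ((hC1.differentiableOn one_ne_zero).differentiableAt (hopen.mem_nhds hx)).hasDerivAt
  set ψ : ℝ → ℝ := fun x => Real.log (deriv φ x) with hψdef
  have hψdiff : ∀ x > 0, HasDerivAt ψ (deriv (deriv φ) x / deriv φ x) x := fun x hx =>
    (hφ'diff x hx).log (ne_of_gt (hderiv_pos x hx))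
  set a := Real.log c with ha
  -- φinv tends to atTop
  have hφinv_top : Tendsto φinv atTop atTop := by
    rw [tendsto_atTop]
    intro M
    have hM : max M 1 ∈ Ioi (0:ℝ) := mem_Ioi.mpr (lt_max_of_lt_right one_pos)
    filter_upwards [hφinv', eventually_ge_atTop (φ (max M 1))] with y hy hyM
    have h1 : φ (max M 1) ≤ φ (φinv y) := by rw [hy.2]; exact hyM
    exact le_trans (le_max_left M 1) ((hmono.le_iff_le hM (mem_Ioi.mpr hy.1)).mp h1)
  have hsub : Tendsto (fun y : ℝ => y - a) atTop atTop :=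
    tendsto_atTop_add_const_right atTop (-a) tendsto_id
  -- key Cauchy-MVT estimate
  have key : ∀ ε' : ℝ, 0 < ε' → ∀ X : ℝ,
      (∀ x ≥ X, |deriv (deriv φ) x / (deriv φ x) ^ 2| < ε') →
      ∀ u v : ℝ, 0 < u → X ≤ u → u < v → |ψ v - ψ u| ≤ ε' * (φ v - φ u) := by
    intro ε' hε' X hX u v hu hXu huv
    have hpos : ∀ x ∈ Icc u v, 0 < x := fun x hx => lt_of_lt_of_le hu hx.1
    have hφc : ContinuousOn φ (Icc u v) := fun x hx =>
      ((hφdiff x (hpos x hx)).continuousAt).continuousWithinAt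
    have hψc : ContinuousOn ψ (Icc u v) := fun x hx =>
      ((hψdiff x (hpos x hx)).continuousAt).continuousWithinAt
    obtain ⟨η, hη, heq⟩ := exists_ratio_hasDerivAt_eq_ratio_slope φ (deriv φ) huv hφc
      (fun x hx => hφdiff x (hpos x (Ioo_subset_Icc_self hx)))
      ψ (fun x => deriv (deriv φ) x / deriv φ x) hψc
      (fun x hx => hψdiff x (hpos x (Ioo_subset_Icc_self hx)))
    have hηpos : 0 < η := hpos η (Ioo_subset_Icc_self hη)
    have hd : 0 < deriv φ η := hderiv_pos η hηpos
    -- heq : (ψ v - ψ u) * deriv φ η = (φ v - φ u) * (deriv (deriv φ) η / deriv φ η)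
    have hψvu : ψ v - ψ u = (φ v - φ u) * (deriv (deriv φ) η / (deriv φ η) ^ 2) := by
      field_simp at heq ⊢
      nlinarith [heq]
    have hφvu : 0 < φ v - φ u := by
      have := hmono (mem_Ioi.mpr hu) (mem_Ioi.mpr (lt_trans hu huv)) huv
      linarith
    rw [hψvu, abs_mul, abs_of_pos hφvu]
    have hb := le_of_lt (hX η (le_trans hXu (le_of_lt hη.1)))
    calc (φ v - φ u) * |deriv (deriv φ) η / (deriv φ η) ^ 2|
        ≤ (φ v - φ u) * ε' := by
          exact mul_le_mul_of_nonneg_left hb (le_of_lt hφvu)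
      _ = ε' * (φ v - φ u) := mul_comm _ _
  -- main limit of log-difference
  have hD : Tendsto (fun y => ψ (φinv y) - ψ (φinv (y - a))) atTop (nhds 0) := by
    rw [NormedAddCommGroup.tendsto_nhds_zero]
    intro ε hε
    set ε' := ε / (|a| + 1) with hε'def
    have hε' : 0 < ε' := div_pos hε (by positivity)
    obtain ⟨X, hX⟩ := (Metric.tendsto_nhds.mp hreg ε' hε').exists_forall_of_atTop
    simp only [Real.dist_eq, sub_zero] at hX
    filter_upwards [hφinv', hsub.eventually hφinv',
      hφinv_top.eventually (eventually_ge_atTop X),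
      (hφinv_top.comp hsub).eventually (eventually_ge_atTop X)] with y hy hy' hX0 hX1
    set u₀ := φinv y
    set u₁ := φinv (y - a)
    have hval : φ u₀ - φ u₁ = a := by rw [hy.2, hy'.2]; ring
    rcases lt_trichotomy u₁ u₀ with h | h | h
    · have hle := key ε' hε' X hX u₁ u₀ hy'.1 hX1 h
      rw [hval] at hle
      have haa : a ≤ |a| := le_abs_self a
      have : |ψ u₀ - ψ u₁| ≤ ε' * |a| := le_trans hle (by nlinarith)
      calc ‖ψ u₀ - ψ u₁‖ ≤ ε' * |a| := this
        _ < ε' * (|a| + 1) := by nlinarith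
        _ = ε := by rw [hε'def]; field_simp
    · simp [h, hε]
    · have hle := key ε' hε' X hX u₀ u₁ hy.1 hX0 h
      have hval' : φ u₁ - φ u₀ = -a := by rw [hy.2, hy'.2]; ring
      rw [hval'] at hle
      have haa : -a ≤ |a| := neg_le_abs a
      rw [show ‖ψ u₀ - ψ u₁‖ = |ψ u₁ - ψ u₀| by rw [Real.norm_eq_abs, abs_sub_comm]]
      calc |ψ u₁ - ψ u₀| ≤ ε' * |a| := le_trans hle (by nlinarith)
        _ < ε' * (|a| + 1) := by nlinarith
        _ = ε := by rw [hε'def]; field_simp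
  -- ratio in terms of exp
  have hratio : Tendsto (fun y => deriv φ (φinv y) / deriv φ (φinv (y - a))) atTop (nhds 1) := by
    have h1 : Tendsto (fun y => Real.exp (ψ (φinv y) - ψ (φinv (y - a)))) atTop (nhds 1) := by
      have := (Real.continuous_exp.tendsto 0).comp hD
      simpa [Function.comp_def] using this
    refine h1.congr' ?_
    filter_upwards [hφinv', hsub.eventually hφinv'] with y hy hy'
    rw [hψdef]
    rw [Real.exp_sub, Real.exp_log (hderiv_pos _ hy.1), Real.exp_log (hderiv_pos _ hy'.1)]
  -- pull back along y = log (1/p)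
  have hy : Tendsto (fun p : ℝ => Real.log (1 / p)) (nhdsWithin 0 (Ioi 0)) atTop := by
    simp only [one_div, Real.log_inv]
    exact tendsto_neg_atBot_atTop.comp Real.tendsto_log_nhdsGT_zero
  have hfinal := hratio.comp hy
  refine hfinal.congr' ?_
  filter_upwards [self_mem_nhdsWithin, hy.eventually hφinv', hy.eventually (hsub.eventually hφinv')]
    with p hp hy1 hy2
  have hp0 : (0:ℝ) < p := hp
  have hcp : 0 < c * p := mul_pos hc hp0
  have hlog : Real.log (1 / (c * p)) = Real.log (1 / p) - a := by
    rw [one_div, one_div, Real.log_inv, Real.log_inv, Real.log_mul (ne_of_gt hc) (ne_of_gt hp0)]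
    ring
  rw [Function.comp_apply, hb _ hcp, hb _ hp0, hlog]
  have hA : 0 < deriv φ (φinv (Real.log (1 / p))) := hderiv_pos _ hy1.1
  have hB : 0 < deriv φ (φinv (Real.log (1 / p) - a)) := hderiv_pos _ hy2.1
  field_simp
end

section
/- Let φ : (0,∞) → ℝ be C², strictly increasing, convex, unbounded, with φ''(x)/(φ'(x))² → 0 as x → ∞. Set x_t = φ⁻¹(t) and b̃(t) = 1/φ'(x_t). Then for any compact set C ⊂ (0,∞), uniformly for c ∈ C, φ⁻¹(t − log c) − φ⁻¹(t) = −b̃(t)·log c + o(b̃(t)) as t → ∞. -/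
open Set Filter Real

/-- Lemma A.5: `φ⁻¹(t − log c) − φ⁻¹(t) = −b̃(t)·log c + o(b̃(t))` as `t → ∞`,
uniformly for `c` in any compact subset of `(0,∞)`, where `b̃(t) = 1/φ'(φ⁻¹(t))`. -/
theorem stmt7 (φ φinv btilde : ℝ → ℝ)
    (hC2 : ContDiffOn ℝ 2 φ (Ioi 0))
    (hmono : StrictMonoOn φ (Ioi 0))
    (hderiv_pos : ∀ x > 0, 0 < deriv φ x)
    (hconv : ConvexOn ℝ (Ioi 0) φ)
    (htop : Tendsto φ atTop atTop)
    (hreg : Tendsto (fun x => deriv (deriv φ) x / (deriv φ x) ^ 2) atTop (nhds 0))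
    (hφinv : ∀ x > 0, φinv (φ x) = x)
    (hφinv' : ∀ᶠ y in atTop, 0 < φinv y ∧ φ (φinv y) = y)
    (hbt : ∀ t, btilde t = 1 / deriv φ (φinv t))
    (C : Set ℝ) (hCcomp : IsCompact C) (hCsub : C ⊆ Ioi 0) :
    TendstoUniformlyOn
      (fun t c => (φinv (t - Real.log c) - φinv t + btilde t * Real.log c) / btilde t)
      (fun _ => 0) atTop C := by
  -- basic differentiability facts for φ
  have hdiff : DifferentiableOn ℝ φ (Ioi 0) := hC2.differentiableOn (by norm_num)
  have hφd : ∀ x > 0, HasDerivAt φ (deriv φ x) x := fun x hx =>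
    ((hdiff x hx).differentiableAt (isOpen_Ioi.mem_nhds hx)).hasDerivAt
  have hd2 : ∀ x > 0, HasDerivAt (deriv φ) (deriv (deriv φ) x) x := by
    intro x hx
    have h1 : ContDiffOn ℝ 1 (deriv φ) (Ioi 0) :=
      hC2.deriv_of_isOpen isOpen_Ioi (by norm_num)
    exact ((h1.differentiableOn one_ne_zero x hx).differentiableAt
      (isOpen_Ioi.mem_nhds hx)).hasDerivAt
  obtain ⟨T₀, hT₀⟩ := eventually_atTop.1 hφinv'
  -- φinv tends to infinity
  have hψtop : Tendsto φinv atTop atTop := by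
    rw [tendsto_atTop]
    intro x₀
    have hx₁pos : (0:ℝ) < max x₀ 1 := lt_of_lt_of_le one_pos (le_max_right _ _)
    filter_upwards [eventually_ge_atTop T₀, eventually_ge_atTop (φ (max x₀ 1))] with y hy1 hy2
    obtain ⟨hpos, heq⟩ := hT₀ y hy1
    by_contra h
    push_neg at h
    have hlt : φinv y < max x₀ 1 := lt_of_lt_of_le h (le_max_left _ _)
    have := hmono (mem_Ioi.2 hpos) (mem_Ioi.2 hx₁pos) hlt
    rw [heq] at this; linarith
  -- φinv is strictly monotone on [T₀, ∞)
  have hψmono : StrictMonoOn φinv (Ici T₀) := by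
    intro y₁ hy₁ y₂ hy₂ h12
    obtain ⟨hp1, he1⟩ := hT₀ y₁ hy₁
    obtain ⟨hp2, he2⟩ := hT₀ y₂ hy₂
    by_contra h
    push_neg at h
    have := hmono.monotoneOn (mem_Ioi.2 hp2) (mem_Ioi.2 hp1) h
    rw [he1, he2] at this; linarith
  -- image of φinv contains a ray
  obtain ⟨x₀, hx₀⟩ := eventually_atTop.1 (htop.eventually_ge_atTop T₀)
  have hx₂pos : (0:ℝ) < max x₀ 1 := lt_of_lt_of_le one_pos (le_max_right _ _)
  have himg : Ici (max x₀ 1) ⊆ φinv '' Ici T₀ := by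
    intro x hx
    have hxpos : 0 < x := lt_of_lt_of_le hx₂pos hx
    exact ⟨φ x, hx₀ x (le_trans (le_max_left _ _) hx), hφinv x hxpos⟩
  -- differentiability of φinv
  have hψderiv : ∀ᶠ y in atTop, HasDerivAt φinv (btilde y) y := by
    filter_upwards [eventually_gt_atTop T₀, hψtop.eventually_gt_atTop (max x₀ 1), hφinv']
      with y hyT hyx hy
    obtain ⟨hpos, heq⟩ := hy
    have hcont : ContinuousAt φinv y := by
      refine hψmono.continuousAt_of_image_mem_nhds (Ici_mem_nhds hyT) ?_
      exact mem_of_superset (Ici_mem_nhds hyx) himg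
    have hf := hφd (φinv y) hpos
    have hf' : deriv φ (φinv y) ≠ 0 := (hderiv_pos _ hpos).ne'
    have hfg : ∀ᶠ z in nhds y, φ (φinv z) = z := by
      filter_upwards [Ici_mem_nhds hyT] with z hz using (hT₀ z hz).2
    have := HasDerivAt.of_local_left_inverse hcont hf hf' hfg
    rw [hbt y, one_div]
    exact this
  -- the log-derivative function
  set g : ℝ → ℝ := fun y => Real.log (deriv φ (φinv y)) with hg
  set r : ℝ → ℝ := fun y => deriv (deriv φ) (φinv y) * btilde y / deriv φ (φinv y) with hr
  have hgderiv : ∀ᶠ y in atTop, HasDerivAt g (r y) y := by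
    filter_upwards [hψderiv, hφinv'] with y hdy hy
    obtain ⟨hpos, _⟩ := hy
    have h1 : HasDerivAt (fun z => deriv φ (φinv z)) (deriv (deriv φ) (φinv y) * btilde y) y :=
      (hd2 _ hpos).comp y hdy
    exact h1.log (hderiv_pos _ hpos).ne'
  have hrtend : Tendsto r atTop (nhds 0) := by
    refine ((hreg.comp hψtop).congr' ?_)
    filter_upwards [hφinv'] with y hy
    obtain ⟨hpos, _⟩ := hy
    have hd : deriv φ (φinv y) ≠ 0 := (hderiv_pos _ hpos).ne'
    show deriv (deriv φ) (φinv y) / (deriv φ (φinv y)) ^ 2 = r y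
    show _ = deriv (deriv φ) (φinv y) * btilde y / deriv φ (φinv y)
    rw [hbt y, mul_one_div, div_div, pow_two]
  have hbpos : ∀ᶠ y in atTop, 0 < btilde y := by
    filter_upwards [hφinv'] with y hy
    obtain ⟨hpos, _⟩ := hy
    rw [hbt y]
    exact one_div_pos.2 (hderiv_pos _ hpos)
  have hbexp : ∀ᶠ y in atTop, btilde y = Real.exp (-(g y)) := by
    filter_upwards [hφinv'] with y hy
    obtain ⟨hpos, _⟩ := hy
    rw [hbt y, hg, Real.exp_neg, Real.exp_log (hderiv_pos _ hpos), one_div]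
  -- |exp d - 1| ≤ exp |d| - 1
  have habs : ∀ d : ℝ, |Real.exp d - 1| ≤ Real.exp |d| - 1 := by
    intro d
    rcases le_or_gt 0 d with h | h
    · rw [abs_of_nonneg h]
      have h1 : (1:ℝ) ≤ Real.exp d := Real.one_le_exp h
      rw [abs_of_nonneg (by linarith)]
    · have ha : 0 < Real.exp d := Real.exp_pos d
      have h1 : Real.exp d < 1 := by
        have := Real.exp_lt_exp.2 h
        rwa [Real.exp_zero] at this
      rw [abs_of_neg h, abs_of_nonpos (by linarith), Real.exp_neg]
      have h2 : Real.exp d * (Real.exp d)⁻¹ = 1 := mul_inv_cancel₀ ha.ne'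
      nlinarith [sq_nonneg (Real.exp d - 1)]
  -- main estimate
  rw [Metric.tendstoUniformlyOn_iff]
  intro ε hε
  obtain ⟨L₀, hL₀⟩ := hCcomp.exists_bound_of_continuousOn
    (Real.continuousOn_log.mono fun x hx => (ne_of_gt (hCsub hx) : x ≠ 0))
  set L := max L₀ 1 with hLdef
  have hL1 : (1:ℝ) ≤ L := le_max_right _ _
  have hLpos : (0:ℝ) < L := lt_of_lt_of_le one_pos hL1
  have hlogC : ∀ c ∈ C, |Real.log c| ≤ L := fun c hc => (hL₀ c hc).trans (le_max_left _ _)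
  have hA : (1:ℝ) < 1 + ε / L := by
    have : 0 < ε / L := div_pos hε hLpos
    linarith
  have hlogA : 0 < Real.log (1 + ε / L) := Real.log_pos hA
  set ε' := Real.log (1 + ε / L) / (2 * L) with hε'def
  have hε'pos : 0 < ε' := div_pos hlogA (by positivity)
  have hkey : Real.exp (ε' * L) - 1 < ε / L := by
    have h1 : ε' * L = Real.log (1 + ε / L) / 2 := by
      rw [hε'def]; field_simp
    rw [h1]
    have h2 : Real.exp (Real.log (1 + ε / L) / 2) < Real.exp (Real.log (1 + ε / L)) :=
      Real.exp_lt_exp.2 (by linarith)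
    rw [Real.exp_log (by linarith)] at h2
    linarith
  have hrsmall : ∀ᶠ y in atTop, |r y| ≤ ε' := by
    have h := Metric.tendsto_nhds.1 hrtend ε' hε'pos
    filter_upwards [h] with y hy
    rw [Real.dist_eq, sub_zero] at hy
    exact hy.le
  obtain ⟨T, hT⟩ := eventually_atTop.1
    (hφinv'.and (hψderiv.and (hgderiv.and (hrsmall.and (hbpos.and hbexp)))))
  filter_upwards [eventually_ge_atTop (T + L)] with t ht c hc
  set s := Real.log c with hsdef
  have hsL : |s| ≤ L := hlogC c hc
  have hsL' := abs_le.1 hsL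
  have htmem : t ∈ Icc (t - L) (t + L) := ⟨by linarith, by linarith⟩
  have hts : t - s ∈ Icc (t - L) (t + L) := ⟨by linarith [hsL'.2], by linarith [hsL'.1]⟩
  have hP : ∀ u ∈ Icc (t - L) (t + L),
      (0 < φinv u ∧ φ (φinv u) = u) ∧ HasDerivAt φinv (btilde u) u ∧
      HasDerivAt g (r u) u ∧ |r u| ≤ ε' ∧ 0 < btilde u ∧ btilde u = Real.exp (-(g u)) :=
    fun u hu => hT u (by linarith [hu.1])
  -- Step A : oscillation of g on the interval
  have hstepA : ∀ u ∈ Icc (t - L) (t + L), |g u - g t| ≤ ε' * L := by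
    intro u hu
    have h := Convex.norm_image_sub_le_of_norm_hasDerivWithin_le
      (f := g) (f' := r) (s := Icc (t - L) (t + L))
      (fun x hx => ((hP x hx).2.2.1).hasDerivWithinAt)
      (fun x hx => by rw [Real.norm_eq_abs]; exact (hP x hx).2.2.2.1)
      (convex_Icc _ _) htmem hu
    rw [Real.norm_eq_abs, Real.norm_eq_abs] at h
    have huL : |u - t| ≤ L := abs_le.2 ⟨by linarith [hu.1], by linarith [hu.2]⟩
    calc |g u - g t| ≤ ε' * |u - t| := h
      _ ≤ ε' * L := mul_le_mul_of_nonneg_left huL hε'pos.le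
  -- Step B : oscillation of btilde
  have hbtpos : 0 < btilde t := (hP t htmem).2.2.2.2.1
  have hstepB : ∀ u ∈ Icc (t - L) (t + L),
      |btilde u - btilde t| ≤ btilde t * (Real.exp (ε' * L) - 1) := by
    intro u hu
    have hbe_u := (hP u hu).2.2.2.2.2
    have hbe_t := (hP t htmem).2.2.2.2.2
    rw [hbe_u, hbe_t]
    have hfactor : Real.exp (-(g u)) - Real.exp (-(g t)) =
        Real.exp (-(g t)) * (Real.exp (g t - g u) - 1) := by
      rw [mul_sub, mul_one, ← Real.exp_add, show -(g t) + (g t - g u) = -(g u) from by ring]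
    rw [hfactor, abs_mul, abs_of_pos (Real.exp_pos _), ← hbe_t]
    refine mul_le_mul_of_nonneg_left ?_ hbtpos.le
    calc |Real.exp (g t - g u) - 1| ≤ Real.exp |g t - g u| - 1 := habs _
      _ ≤ Real.exp (ε' * L) - 1 := by
          have h1 : |g t - g u| ≤ ε' * L := by rw [abs_sub_comm]; exact hstepA u hu
          have := Real.exp_le_exp.2 h1
          linarith
  -- Step C : mean value theorem for the main expression
  have hmain : |φinv (t - s) - φinv t + btilde t * s| ≤
      btilde t * (Real.exp (ε' * L) - 1) * L := by
    have h := Convex.norm_image_sub_le_of_norm_hasDerivWithin_le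
      (f := fun u => φinv u - u * btilde t) (f' := fun u => btilde u - btilde t)
      (s := Icc (t - L) (t + L))
      (fun x hx => (((hP x hx).2.1).sub (hasDerivAt_mul_const (btilde t))).hasDerivWithinAt)
      (fun x hx => by rw [Real.norm_eq_abs]; exact hstepB x hx)
      (convex_Icc _ _) htmem hts
    rw [Real.norm_eq_abs, Real.norm_eq_abs] at h
    have harg : φinv (t - s) - (t - s) * btilde t - (φinv t - t * btilde t) =
        φinv (t - s) - φinv t + btilde t * s := by ring
    rw [harg] at h
    have habs2 : |t - s - t| = |s| := by rw [show t - s - t = -s from by ring, abs_neg]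
    rw [habs2] at h
    have hKnn : 0 ≤ btilde t * (Real.exp (ε' * L) - 1) := by
      have : (1:ℝ) ≤ Real.exp (ε' * L) := Real.one_le_exp (by positivity)
      have h2 : 0 ≤ Real.exp (ε' * L) - 1 := by linarith
      exact mul_nonneg hbtpos.le h2
    calc |φinv (t - s) - φinv t + btilde t * s| ≤ btilde t * (Real.exp (ε' * L) - 1) * |s| := h
      _ ≤ btilde t * (Real.exp (ε' * L) - 1) * L := mul_le_mul_of_nonneg_left hsL hKnn
  -- conclude
  have hlt : btilde t * (Real.exp (ε' * L) - 1) * L < ε * btilde t := by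
    have h3 : btilde t * (Real.exp (ε' * L) - 1) < btilde t * (ε / L) :=
      mul_lt_mul_of_pos_left hkey hbtpos
    have h4 : btilde t * (Real.exp (ε' * L) - 1) * L < btilde t * (ε / L) * L :=
      mul_lt_mul_of_pos_right h3 hLpos
    have h5 : btilde t * (ε / L) * L = ε * btilde t := by
      field_simp
    linarith
  rw [Real.dist_eq]
  rw [zero_sub, abs_neg, abs_div, abs_of_pos hbtpos, div_lt_iff₀ hbtpos]
  exact lt_of_le_of_lt hmain hlt
end

section
/- Let φ : (0,∞) → ℝ be C², strictly increasing, convex, unbounded, with φ''(x)/(φ'(x))² → 0 as x → ∞. Then for every ε > 0 there exist C_ε > 0 and x₀ such that φ'(x) ≤ C_ε · e^{ε·φ(x)} for all x ≥ x₀. -/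
open Set Filter Real

/-- For `φ` C², increasing, convex, unbounded with `φ''/(φ')² → 0`: for every `ε > 0`
there exist `C_ε > 0` and `x₀` with `φ'(x) ≤ C_ε · exp(ε·φ(x))` for all `x ≥ x₀`. -/
theorem stmt8 (φ : ℝ → ℝ)
    (hC2 : ContDiffOn ℝ 2 φ (Ioi 0))
    (hmono : StrictMonoOn φ (Ioi 0))
    (hderiv_pos : ∀ x > 0, 0 < deriv φ x)
    (hconv : ConvexOn ℝ (Ioi 0) φ)
    (htop : Tendsto φ atTop atTop)
    (hreg : Tendsto (fun x => deriv (deriv φ) x / (deriv φ x) ^ 2) atTop (nhds 0)) :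
    ∀ ε > 0, ∃ Cε > 0, ∃ x₀ : ℝ, ∀ x ≥ x₀, deriv φ x ≤ Cε * Real.exp (ε * φ x) := by
  intro ε hε
  obtain ⟨a₀, ha₀⟩ := eventually_atTop.mp (hreg.eventually_lt_const hε)
  set a : ℝ := max a₀ 1 with ha_def
  have hapos : (0:ℝ) < a := lt_of_lt_of_le one_pos (le_max_right _ _)
  have hd1 : ContDiffOn ℝ 1 (deriv φ) (Ioi 0) := by
    have := hC2.deriv_of_isOpen isOpen_Ioi (m := 1) (by norm_num)
    exact this
  have hdφ : ∀ x : ℝ, 0 < x → HasDerivAt φ (deriv φ x) x := fun x hx =>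
    ((hC2.differentiableOn (by norm_num) x hx).differentiableAt
      (isOpen_Ioi.mem_nhds hx)).hasDerivAt
  have hdd : ∀ x : ℝ, 0 < x → HasDerivAt (deriv φ) (deriv (deriv φ) x) x := fun x hx =>
    ((hd1.differentiableOn (by norm_num) x hx).differentiableAt
      (isOpen_Ioi.mem_nhds hx)).hasDerivAt
  set h : ℝ → ℝ := fun x => Real.log (deriv φ x) - ε * φ x with hh
  have hhd : ∀ x : ℝ, 0 < x →
      HasDerivAt h (deriv (deriv φ) x / deriv φ x - ε * deriv φ x) x := by
    intro x hx
    have h1 := (Real.hasDerivAt_log (hderiv_pos x hx).ne').comp x (hdd x hx)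
    have h2 := (hdφ x hx).const_mul ε
    have := h1.sub h2
    rw [div_eq_inv_mul]
    exact this
  have hanti : AntitoneOn h (Ici a) := by
    apply antitoneOn_of_deriv_nonpos (convex_Ici a)
    · intro x hx
      have hx0 : 0 < x := lt_of_lt_of_le hapos hx
      exact (hhd x hx0).continuousAt.continuousWithinAt
    · intro x hx
      rw [interior_Ici] at hx
      exact ((hhd x (lt_trans hapos hx)).differentiableAt).differentiableWithinAt
    · intro x hx
      rw [interior_Ici] at hx
      have hx0 : 0 < x := lt_trans hapos hx
      rw [(hhd x hx0).deriv]
      have hp := hderiv_pos x hx0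
      have hlt : deriv (deriv φ) x / (deriv φ x) ^ 2 < ε :=
        ha₀ x (le_trans (le_max_left _ _) hx.le)
      have : deriv (deriv φ) x < ε * (deriv φ x) ^ 2 :=
        (div_lt_iff₀ (by positivity)).mp hlt
      have : deriv (deriv φ) x / deriv φ x ≤ ε * deriv φ x := by
        rw [div_le_iff₀ hp]
        nlinarith
      linarith
  refine ⟨Real.exp (h a), Real.exp_pos _, a, fun x hx => ?_⟩
  have hx0 : 0 < x := lt_of_lt_of_le hapos hx
  have hle : h x ≤ h a := hanti self_mem_Ici hx hx
  have : Real.log (deriv φ x) ≤ h a + ε * φ x := by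
    simp only [hh] at hle ⊢; linarith
  calc deriv φ x = Real.exp (Real.log (deriv φ x)) :=
        (Real.exp_log (hderiv_pos x hx0)).symm
    _ ≤ Real.exp (h a + ε * φ x) := Real.exp_le_exp.mpr this
    _ = Real.exp (h a) * Real.exp (ε * φ x) := Real.exp_add _ _
end

section
/- Let f be a symmetric, log-concave, positive C¹ density on ℝ, strictly decreasing on (0,∞), with cdf F, and define Ψ(x) = x + (1 − F(x))/f(x) for x > 0. Then Ψ'(x) = −(1 − F(x))·f'(x)/(f(x))², and if additionally lim_{x→∞} f(x)f''(x)/(f'(x))² = 1 (with f twice differentiable on (0,∞)), then Ψ'(x) → 1 as x → ∞. -/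
open MeasureTheory Set Filter

/-- For `Ψ(x) = x + (1 − F(x))/f(x)`: `Ψ'(x) = −(1 − F(x))·f'(x)/f(x)²` for `x > 0`,
and under the tail regularity condition `f·f''/(f')² → 1`, `Ψ'(x) → 1` as `x → ∞`. -/
theorem stmt13 (f F Ψ : ℝ → ℝ)
    (hpos : ∀ x, 0 < f x)
    (hsymm : ∀ z, f (-z) = f z)
    (hlc : ConcaveOn ℝ univ (fun x => Real.log (f x)))
    (hC1 : ContDiff ℝ 1 f)
    (hC2 : ContDiffOn ℝ 2 f (Ioi 0))
    (hanti : StrictAntiOn f (Ioi 0))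
    (hlim : Tendsto f atTop (nhds 0))
    (hint : Integrable f)
    (hdens : (∫ x, f x) = 1)
    (hF : ∀ x, F x = ∫ z in Iic x, f z)
    (hΨ : ∀ x, Ψ x = x + (1 - F x) / f x)
    (hreg : Tendsto (fun x => f x * deriv (deriv f) x / (deriv f x) ^ 2) atTop (nhds 1)) :
    (∀ x > 0, deriv Ψ x = -((1 - F x) * deriv f x) / (f x) ^ 2) ∧
      Tendsto (fun x => deriv Ψ x) atTop (nhds 1) := by
  have hfd : Differentiable ℝ f := hC1.differentiable one_ne_zero
  have hfc : Continuous f := hC1.continuous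
  have hne : ∀ x, f x ≠ 0 := fun x => (hpos x).ne'
  set f' : ℝ → ℝ := deriv f with hf'def
  set f'' : ℝ → ℝ := deriv (deriv f) with hf''def
  set r : ℝ → ℝ := fun x => f x * f'' x / (f' x) ^ 2 with hrdef
  -- derivative of F
  have hFd : ∀ x, HasDerivAt F (f x) x := by
    intro x
    have h0 : F = fun y => (∫ z in Iic (0:ℝ), f z) + ∫ z in (0:ℝ)..y, f z := by
      funext y
      have h := intervalIntegral.integral_Iic_sub_Iic (a := 0) (b := y)
        hint.integrableOn hint.integrableOn
      rw [hF y]; linarith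
    rw [h0]
    exact (intervalIntegral.integral_hasDerivAt_right (hfc.intervalIntegrable _ _)
      hfc.stronglyMeasurable.stronglyMeasurableAtFilter hfc.continuousAt).const_add _
  -- derivative of Ψ
  have hderivΨ : ∀ x, deriv Ψ x = -((1 - F x) * f' x) / (f x) ^ 2 := by
    intro x
    have h1 : HasDerivAt (fun y => 1 - F y) (-(f x)) x := (hFd x).const_sub 1
    have h2 : HasDerivAt f (f' x) x := (hfd x).hasDerivAt
    have h4 := (hasDerivAt_id x).add (h1.div h2 (hne x))
    have hΨeq : Ψ = fun y => y + (1 - F y) / f y := funext hΨ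
    have h4' : HasDerivAt Ψ (1 + (-f x * f x - (1 - F x) * f' x) / f x ^ 2) x := by
      rw [hΨeq]; exact h4
    rw [h4'.deriv]
    field_simp [hne x]
    ring
  refine ⟨fun x _ => hderivΨ x, ?_⟩
  -- F → 1
  have hF1 : Tendsto F atTop (nhds 1) := by
    have := (MeasureTheory.aecover_Iic (μ := volume) (l := atTop)
      tendsto_id).integral_tendsto_of_countably_generated hint
    rw [hdens] at this
    have hFeq : F = fun b => ∫ z in Iic b, f z := funext hF
    rw [hFeq]
    exact this
  have hnum0 : Tendsto (fun x => 1 - F x) atTop (nhds 0) := by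
    have h := (tendsto_const_nhds (x := (1:ℝ)) (f := atTop (α := ℝ))).sub hF1
    simpa using h
  -- second derivative exists on Ioi 0
  have hd2 : ∀ x > (0:ℝ), HasDerivAt f' (f'' x) x := by
    intro x hx
    have h := (hC2.deriv_of_isOpen (m := 1) isOpen_Ioi (by norm_num)).contDiffAt
      (isOpen_Ioi.mem_nhds hx)
    exact (h.differentiableAt one_ne_zero).hasDerivAt
  -- eventually r close to 1, hence f' ≠ 0
  have h1 : ∀ᶠ x in atTop, (1:ℝ)/2 < r x := hreg.eventually (eventually_gt_nhds (by norm_num))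
  have h2ev : ∀ᶠ x in atTop, r x < (3:ℝ)/2 := hreg.eventually (eventually_lt_nhds (by norm_num))
  have hf'ne : ∀ᶠ x in atTop, f' x ≠ 0 := by
    filter_upwards [h1] with x hx
    intro h0
    rw [hrdef] at hx
    simp only [h0] at hx
    norm_num at hx
  -- f' ≤ 0 on [0, ∞) via log-concavity
  have hφd : ∀ x, HasDerivAt (fun y => -Real.log (f y)) (-(f' x / f x)) x :=
    fun x => (((hfd x).hasDerivAt).log (hne x)).neg
  have hconv : ConvexOn ℝ univ (fun y => -Real.log (f y)) := hlc.neg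
  have hmono : MonotoneOn (deriv (fun y => -Real.log (f y))) univ :=
    hconv.monotoneOn_deriv (fun x _ => (hφd x).differentiableAt)
  have hf'0 : f' 0 = 0 := by
    have h0 : HasDerivAt f (f' 0) 0 := (hfd 0).hasDerivAt
    have h0' : HasDerivAt f (f' 0) (-0 : ℝ) := by rwa [neg_zero]
    have hneg : HasDerivAt (fun z => f (-z)) (f' 0 * (-1)) 0 := h0'.comp 0 (hasDerivAt_neg 0)
    have heq : (fun z => f (-z)) = f := funext hsymm
    rw [heq] at hneg
    have := hneg.unique h0
    linarith
  have hf'le : ∀ x ≥ (0:ℝ), f' x ≤ 0 := by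
    intro x hx
    have := hmono (mem_univ 0) (mem_univ x) hx
    rw [(hφd 0).deriv, (hφd x).deriv, hf'0] at this
    simp only [zero_div, neg_zero] at this
    rw [neg_nonneg] at this
    have hm := mul_nonpos_of_nonpos_of_nonneg this (hpos x).le
    rwa [div_mul_cancel₀ _ (hne x)] at hm
  -- choose a tail point
  obtain ⟨a₀, ha₀⟩ := eventually_atTop.mp (h1.and hf'ne)
  set a := max a₀ 1 with hadef
  have hapos : (0:ℝ) < a := lt_of_lt_of_le one_pos (le_max_right _ _)
  have hf'neg : ∀ x ≥ a, f' x < 0 := by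
    intro x hx
    have hxpos : 0 < x := lt_of_lt_of_le hapos hx
    exact (hf'le x hxpos.le).lt_of_ne (ha₀ x (le_trans (le_max_left _ _) hx)).2
  set c := -(f' a / f a) with hcdef
  have hcpos : 0 < c := by
    exact neg_pos.mpr (div_neg_of_neg_of_pos (hf'neg a le_rfl) (hpos a))
  have hφmono : ∀ x ≥ a, c ≤ -(f' x / f x) := by
    intro x hx
    have := hmono (mem_univ a) (mem_univ x) hx
    rwa [(hφd a).deriv, (hφd x).deriv] at this
  set g : ℝ → ℝ := fun y => -(f y) ^ 2 / f' y with hgdef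
  have hgb : ∀ x ≥ a, 0 ≤ g x ∧ g x ≤ f x / c := by
    intro x hx
    have hfx := hpos x
    have hf'x := hf'neg x hx
    have hgx : g x = f x / (-(f' x / f x)) := by
      rw [hgdef]
      field_simp [hf'x.ne]
    constructor
    · rw [hgx]
      exact div_nonneg hfx.le (le_trans hcpos.le (hφmono x hx))
    · rw [hgx]
      exact div_le_div_of_nonneg_left hfx.le hcpos (hφmono x hx)
  have hg0 : Tendsto g atTop (nhds 0) := by
    have hb : Tendsto (fun x => f x / c) atTop (nhds 0) := by
      have := hlim.div_const c
      simpa using this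
    refine squeeze_zero' ?_ ?_ hb
    · filter_upwards [eventually_ge_atTop a] with x hx using (hgb x hx).1
    · filter_upwards [eventually_ge_atTop a] with x hx using (hgb x hx).2
  -- l'Hôpital
  have hff' : ∀ᶠ x in atTop, HasDerivAt (fun y => 1 - F y) (-(f x)) x :=
    Filter.Eventually.of_forall fun x => (hFd x).const_sub 1
  have hgg' : ∀ᶠ x in atTop, HasDerivAt g (f x * (r x - 2)) x := by
    filter_upwards [eventually_ge_atTop a] with x hx
    have hxpos : 0 < x := lt_of_lt_of_le hapos hx
    have hf'x : f' x ≠ 0 := (hf'neg x hx).ne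
    have hnum : HasDerivAt (fun y => -(f y) ^ 2) (-(2 * f x * f' x)) x := by
      have h := (((hfd x).hasDerivAt).pow 2).neg
      refine h.congr_deriv ?_
      ring
    have h := hnum.div (hd2 x hxpos) hf'x
    refine h.congr_deriv ?_
    rw [hrdef]
    field_simp
    ring
  have hg'ne : ∀ᶠ x in atTop, f x * (r x - 2) ≠ 0 := by
    filter_upwards [h2ev] with x hx
    have hlt : r x - 2 < 0 := by linarith
    exact mul_ne_zero (hne x) hlt.ne
  have hdiv : Tendsto (fun x => -(f x) / (f x * (r x - 2))) atTop (nhds 1) := by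
    have h2r : Tendsto (fun x => r x - 2) atTop (nhds (-1)) := by
      have := hreg.sub_const 2
      norm_num at this
      exact this
    have hlim2 : Tendsto (fun x => -(r x - 2)⁻¹) atTop (nhds 1) := by
      have := (h2r.inv₀ (by norm_num)).neg
      norm_num at this
      exact this
    refine Tendsto.congr' ?_ hlim2
    filter_upwards [h2ev] with x hx
    have hr2 : r x - 2 ≠ 0 := sub_ne_zero.mpr (by linarith)
    field_simp [hne x, hr2]
  have key := HasDerivAt.lhopital_zero_atTop hff' hgg' hg'ne hnum0 hg0 hdiv
  refine Tendsto.congr' ?_ key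
  filter_upwards [eventually_ge_atTop a] with x hx
  have hf'x : f' x ≠ 0 := (hf'neg x hx).ne
  rw [hderivΨ x, hgdef]
  simp only
  rw [div_div_eq_mul_div, div_neg, neg_div]
end
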